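/- arXiv:hep-th/9711139 — 7 statements merged into one kernel-verified Lean document; each statement's English description precedes it below -/
import Mathlib

section
/- Let ρ > 0 and let Δ : ℕ → ℝ be a sequence with Δ_n > 1 for all n. If the series ∑_n 1/(Δ_n·√(ln Δ_n)) converges, then the set Z_ρ({Δ_n}) := { x ∈ ℝ^ℕ : there exists N ∈ ℕ such that |x_n| < √(2ρ·ln Δ_n) for all n ≥ N } has μ_ρ-measure one. -/
/-!
By the Mills-ratio bound `P(|X| ≥ a) ≤ 2 (v / a) φ(a)` for a centred Gaussian of variance `v`,
the threshold `a = √(2ρ log Δₙ)` is exceeded by the `n`-th coordinate with probability at most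
`1 / (√π Δₙ √(log Δₙ))`. These probabilities are summable, so by the first Borel–Cantelli lemma
almost every sequence stays below its thresholds from some index on.
-/

open MeasureTheory ProbabilityTheory
open scoped NNReal ENNReal

/-- A measure `μ` on `ℝ^ℕ` (with the product σ-algebra) is the countable product of
identical Gaussian measures of mean `0` and variance `ρ` iff all its finite-dimensional
marginals are the corresponding products of Gaussians.  This property determines the
measure uniquely on the product σ-algebra. -/
def IsProductGaussian (ρ : ℝ≥0) (μ : Measure (ℕ → ℝ)) : Prop :=
  ∀ (s : Finset ℕ) (A : ℕ → Set ℝ), (∀ i ∈ s, MeasurableSet (A i)) →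
    μ {x : ℕ → ℝ | ∀ i ∈ s, x i ∈ A i} = ∏ i ∈ s, gaussianReal 0 ρ (A i)

open Filter Set Real Topology

theorem integral_Ioi_mul_exp_neg_mul_sq {b : ℝ} (hb : 0 < b) (a : ℝ) :
    ∫ x in Ioi a, x * exp (-b * x ^ 2) = exp (-b * a ^ 2) / (2 * b) := by
  have hderiv (x : ℝ) : HasDerivAt (fun x ↦ -(2 * b)⁻¹ * exp (-b * x ^ 2))
      (x * exp (-b * x ^ 2)) x :=
    (((hasDerivAt_pow 2 x).const_mul (-b)).exp.const_mul _).congr_deriv (by field_simp; ring)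
  have hlim : Tendsto (fun x : ℝ ↦ -(2 * b)⁻¹ * exp (-b * x ^ 2)) atTop (𝓝 (-(2 * b)⁻¹ * 0)) :=
    (tendsto_exp_atBot.comp ((tendsto_pow_atTop two_ne_zero).const_mul_atTop_of_neg
      (neg_lt_zero.2 hb))).const_mul _
  rw [integral_Ioi_of_hasDerivAt_of_tendsto' (fun x _ ↦ hderiv x)
    (integrable_mul_exp_neg_mul_sq hb).integrableOn hlim]
  field_simp
  ring

theorem integral_Ioi_exp_neg_mul_sq_le {b : ℝ} (hb : 0 < b) {a : ℝ} (ha : 0 < a) :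
    ∫ x in Ioi a, exp (-b * x ^ 2) ≤ exp (-b * a ^ 2) / (2 * b * a) := by
  calc ∫ x in Ioi a, exp (-b * x ^ 2)
      ≤ ∫ x in Ioi a, a⁻¹ * (x * exp (-b * x ^ 2)) := by
        refine setIntegral_mono_on (integrable_exp_neg_mul_sq hb).integrableOn
          ((integrable_mul_exp_neg_mul_sq hb).const_mul a⁻¹).integrableOn measurableSet_Ioi
          fun x hx ↦ ?_
        rw [← mul_assoc, le_mul_iff_one_le_left (exp_pos _), le_inv_mul_iff₀ ha, mul_one]
        exact le_of_lt hx
    _ = exp (-b * a ^ 2) / (2 * b * a) := by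
        rw [integral_const_mul, integral_Ioi_mul_exp_neg_mul_sq hb]
        field_simp

theorem gaussianReal_Ici_le {v : ℝ≥0} (hv : v ≠ 0) {a : ℝ} (ha : 0 < a) :
    gaussianReal 0 v (Ici a) ≤ ENNReal.ofReal (v / a * gaussianPDFReal 0 v a) := by
  have hv' : (0 : ℝ) < v := by positivity
  have hpdf : gaussianPDFReal 0 v = fun x ↦ (√(2 * π * v))⁻¹ * exp (-(2 * v : ℝ)⁻¹ * x ^ 2) := by
    ext x
    simp only [gaussianPDFReal, sub_zero]
    congr 2
    ring
  rw [gaussianReal_apply_eq_integral 0 hv, integral_Ici_eq_integral_Ioi, hpdf,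
    integral_const_mul]
  refine ENNReal.ofReal_le_ofReal ?_
  calc (√(2 * π * v))⁻¹ * ∫ x in Ioi a, exp (-(2 * v : ℝ)⁻¹ * x ^ 2)
      ≤ (√(2 * π * v))⁻¹ * (exp (-(2 * v : ℝ)⁻¹ * a ^ 2) / (2 * (2 * v : ℝ)⁻¹ * a)) := by
        gcongr
        exact integral_Ioi_exp_neg_mul_sq_le (by positivity) ha
    _ = v / a * ((√(2 * π * v))⁻¹ * exp (-(2 * v : ℝ)⁻¹ * a ^ 2)) := by
        field_simp

theorem gaussianReal_Iic_neg_eq (v : ℝ≥0) (a : ℝ) :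
    gaussianReal 0 v (Iic (-a)) = gaussianReal 0 v (Ici a) := by
  conv_rhs => rw [← neg_zero, ← gaussianReal_map_neg,
    Measure.map_apply measurable_neg measurableSet_Ici]
  simp

theorem gaussianReal_setOf_le_abs_le {v : ℝ≥0} (hv : v ≠ 0) {a : ℝ} (ha : 0 < a) :
    gaussianReal 0 v {y | a ≤ |y|} ≤ ENNReal.ofReal (2 * (v / a * gaussianPDFReal 0 v a)) := by
  have hsplit : {y : ℝ | a ≤ |y|} = Iic (-a) ∪ Ici a := by
    ext y
    simp only [mem_ofPred_eq, mem_union, mem_Iic, mem_Ici, le_abs', or_comm]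
  have hD : 0 ≤ v / a * gaussianPDFReal 0 v a := by
    have := gaussianPDFReal_nonneg 0 v a
    positivity
  calc gaussianReal 0 v {y | a ≤ |y|}
      ≤ gaussianReal 0 v (Iic (-a)) + gaussianReal 0 v (Ici a) :=
        hsplit ▸ measure_union_le _ _
    _ = 2 * gaussianReal 0 v (Ici a) := by rw [gaussianReal_Iic_neg_eq, two_mul]
    _ ≤ 2 * ENNReal.ofReal (v / a * gaussianPDFReal 0 v a) := by
        gcongr
        exact gaussianReal_Ici_le hv ha
    _ = ENNReal.ofReal (2 * (v / a * gaussianPDFReal 0 v a)) := by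
        rw [ENNReal.ofReal_mul zero_le_two, ENNReal.ofReal_ofNat]

theorem gaussianReal_setOf_sqrt_two_mul_log_le_abs_le {v : ℝ≥0} (hv : v ≠ 0) {t : ℝ} (ht : 1 < t) :
    gaussianReal 0 v {y | √(2 * v * log t) ≤ |y|} ≤
      ENNReal.ofReal ((√π)⁻¹ * (1 / (t * √(log t)))) := by
  have hv' : (0 : ℝ) < v := by positivity
  have hlog : 0 < log t := log_pos ht
  refine (gaussianReal_setOf_le_abs_le hv (by positivity)).trans
    (ENNReal.ofReal_le_ofReal (le_of_eq ?_))
  have hexp : exp (-(√(2 * v * log t) - 0) ^ 2 / (2 * v)) = t⁻¹ := by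
    rw [sub_zero, sq_sqrt (by positivity), neg_div, mul_div_cancel_left₀ _ (by positivity),
      exp_neg, exp_log (by linarith)]
  have hsqrt : √(2 * v * log t) * √(2 * π * v) = 2 * v * (√π * √(log t)) := by
    rw [← sqrt_mul (by positivity), show 2 * v * log t * (2 * π * v) = (2 * v) ^ 2 * (π * log t)
      by ring, sqrt_mul (by positivity), sqrt_sq (by positivity), sqrt_mul pi_pos.le]
  rw [gaussianPDFReal, hexp]
  calc 2 * (v / √(2 * v * log t) * ((√(2 * π * v))⁻¹ * t⁻¹))
      = 2 * v / (√(2 * v * log t) * √(2 * π * v) * t) := by ring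
    _ = (√π)⁻¹ * (1 / (t * √(log t))) := by
        rw [hsqrt]
        field_simp

namespace IsProductGaussian

variable {ρ : ℝ≥0} {μ : Measure (ℕ → ℝ)}

theorem isProbabilityMeasure (hμ : IsProductGaussian ρ μ) : IsProbabilityMeasure μ :=
  ⟨by simpa using hμ ∅ (fun _ ↦ univ) (by simp)⟩

theorem measure_eval_preimage (hμ : IsProductGaussian ρ μ) (n : ℕ) {A : Set ℝ}
    (hA : MeasurableSet A) : μ ((fun x ↦ x n) ⁻¹' A) = gaussianReal 0 ρ A := by
  have := hμ {n} (fun _ ↦ A) (fun _ _ ↦ hA)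
  simp only [Finset.mem_singleton, forall_eq, Finset.prod_singleton] at this
  exact this

end IsProductGaussian

theorem measure_eq_one_of_ae_mem {α : Type*} [MeasurableSpace α] {μ : Measure α}
    [IsProbabilityMeasure μ] {s : Set α} (hs : ∀ᵐ x ∂μ, x ∈ s) : μ s = 1 :=
  (measure_congr (ae_eq_univ.2 hs)).trans measure_univ

theorem gaussian_product_measure_of_summable (ρ : ℝ≥0) (hρ : 0 < ρ)
    (μ : Measure (ℕ → ℝ)) (hμ : IsProductGaussian ρ μ)
    (Δ : ℕ → ℝ) (hΔ : ∀ n, 1 < Δ n)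
    (hsum : Summable fun n => 1 / (Δ n * Real.sqrt (Real.log (Δ n)))) :
    μ {x : ℕ → ℝ | ∃ N : ℕ, ∀ n ≥ N, |x n| < Real.sqrt (2 * ρ * Real.log (Δ n))} = 1 := by
  have := hμ.isProbabilityMeasure
  set s : ℕ → Set (ℕ → ℝ) := fun n ↦ (fun x ↦ x n) ⁻¹' {y | √(2 * ρ * log (Δ n)) ≤ |y|}
  have htail (n : ℕ) : μ (s n) ≤ ENNReal.ofReal ((√π)⁻¹ * (1 / (Δ n * √(log (Δ n))))) := by
    rw [hμ.measure_eval_preimage n (measurableSet_le measurable_const measurable_abs)]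
    exact gaussianReal_setOf_sqrt_two_mul_log_le_abs_le hρ.ne' (hΔ n)
  have hfinite : ∑' n, μ (s n) ≠ ∞ :=
    ne_top_of_le_ne_top (hsum.mul_left _).tsum_ofReal_ne_top (ENNReal.tsum_le_tsum htail)
  refine measure_eq_one_of_ae_mem ((ae_eventually_notMem hfinite).mono fun x hx ↦ ?_)
  obtain ⟨N, hN⟩ := eventually_atTop.1 hx
  exact ⟨N, fun n hn ↦ not_le.1 (hN n hn)⟩
end

section
/- Let ρ > 0 and let Δ : ℕ → ℝ be a sequence with Δ_n > 1 for all n. If the series ∑_n 1/(Δ_n·√(ln Δ_n)) diverges, then the set Z_ρ({Δ_n}) := { x ∈ ℝ^ℕ : there exists N ∈ ℕ such that |x_n| < √(2ρ·ln Δ_n) for all n ≥ N } has μ_ρ-measure zero. -/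
open MeasureTheory ProbabilityTheory Filter Real
open scoped NNReal ENNReal

lemma measure_eventually_mem_eq_zero_of_tsum_compl_eq_top {α : Type*} [MeasurableSpace α]
    {μ : Measure (ℕ → α)} {ν : ℕ → Measure α}
    (hμ : ∀ (s : Finset ℕ) (A : ℕ → Set α), (∀ i ∈ s, MeasurableSet (A i)) →
      μ {x | ∀ i ∈ s, x i ∈ A i} = ∏ i ∈ s, ν i (A i))
    {A : ℕ → Set α} (hA : ∀ n, MeasurableSet (A n)) (hsum : ∑' n, ν n (A n)ᶜ = ∞) :
    μ {x | ∃ N, ∀ n ≥ N, x n ∈ A n} = 0 := by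
  set B : ℕ → Set (ℕ → α) := fun n => {x | x n ∈ (A n)ᶜ}
  have hB : ∀ n, MeasurableSet (B n) := fun n => measurable_pi_apply n (hA n).compl
  have hμB : ∀ s : Finset ℕ, μ (⋂ i ∈ s, B i) = ∏ i ∈ s, ν i (A i)ᶜ := fun s => by
    rw [← hμ s _ fun i _ => (hA i).compl]
    congr 1
    ext x
    simp [B]
  have hμB_single : ∀ n, μ (B n) = ν n (A n)ᶜ := fun n => by simpa using hμB {n}
  have hind : iIndepSet B μ := (iIndepSet_iff_meas_biInter hB).2 fun s => by
    simp only [hμB, hμB_single]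
  have := hind.isProbabilityMeasure
  have hlimsup : μ (limsup B atTop) = 1 :=
    measure_limsup_eq_one hB hind (by simpa only [hμB_single] using hsum)
  have hcompl : {x | ∃ N, ∀ n ≥ N, x n ∈ A n} = (limsup B atTop)ᶜ := by
    ext x
    simp [B, mem_limsup_iff_frequently_mem, eventually_atTop]
  rw [hcompl, prob_compl_eq_zero_iff (MeasurableSet.measurableSet_limsup hB)]
  exact hlimsup

lemma mul_gaussianPDFReal_le_gaussianReal_Ici (m : ℝ) {v : ℝ≥0} (hv : v ≠ 0) {c δ : ℝ}
    (hc : m ≤ c) (hδ : 0 ≤ δ) :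
    δ * gaussianPDFReal m v (c + δ) ≤ (gaussianReal m v).real (Set.Ici c) := by
  have hpdf_anti :
      ∀ x ∈ Set.Icc c (c + δ), gaussianPDFReal m v (c + δ) ≤ gaussianPDFReal m v x := by
    rintro x ⟨hcx, hxδ⟩
    rw [gaussianPDFReal, gaussianPDFReal]
    gcongr
    linarith
  calc δ * gaussianPDFReal m v (c + δ)
      = ∫ _ in Set.Icc c (c + δ), gaussianPDFReal m v (c + δ) := by simp [hδ]
    _ ≤ ∫ x in Set.Icc c (c + δ), gaussianPDFReal m v x :=
        setIntegral_mono_on (integrableOn_const (by simp))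
          (integrable_gaussianPDFReal m v).integrableOn measurableSet_Icc hpdf_anti
    _ = (gaussianReal m v).real (Set.Icc c (c + δ)) := by
        rw [measureReal_def, gaussianReal_apply_eq_integral m hv,
          ENNReal.toReal_ofReal (setIntegral_nonneg measurableSet_Icc fun x _ =>
            gaussianPDFReal_nonneg m v x)]
    _ ≤ (gaussianReal m v).real (Set.Ici c) := measureReal_mono Set.Icc_subset_Ici_self

lemma exp_neg_div_sqrt_le_gaussianReal_Ici {ρ : ℝ≥0} (hρ : ρ ≠ 0) {t : ℝ} (ht : 1 ≤ t) :
    exp (-2) / (2 * √π) * (exp (-t) / √t) ≤ (gaussianReal 0 ρ).real (Set.Ici √(2 * ρ * t)) := by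
  have hρ0 : (0 : ℝ) < ρ := by positivity
  have ht0 : 0 < t := by linarith
  -- With `δ = √(ρ / 2t)` the cross term of `(√(2ρt) + δ)² / 2ρ` is exactly `1`.
  refine le_trans ?_ (mul_gaussianPDFReal_le_gaussianReal_Ici 0 hρ (δ := √(ρ / (2 * t)))
    (sqrt_nonneg _) (sqrt_nonneg _))
  obtain ⟨r, hr0, hr⟩ : ∃ r, 0 < r ∧ (ρ : ℝ) = r ^ 2 := ⟨√ρ, by positivity, (sq_sqrt hρ0.le).symm⟩
  obtain ⟨s, hs1, rfl⟩ : ∃ s, 1 ≤ s ∧ t = s ^ 2 := ⟨√t, one_le_sqrt.2 ht, (sq_sqrt ht0.le).symm⟩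
  have hs0 : 0 < s := by linarith
  have h2 : √2 ^ 2 = 2 := sq_sqrt zero_le_two
  have hc : √(2 * r ^ 2 * s ^ 2) = √2 * r * s := by
    rw [sqrt_mul' _ (by positivity), sqrt_mul zero_le_two, sqrt_sq hr0.le, sqrt_sq hs0.le]
  have hδ : √(r ^ 2 / (2 * s ^ 2)) = r / (√2 * s) := by
    rw [sqrt_div' _ (by positivity), sqrt_sq hr0.le, sqrt_mul zero_le_two, sqrt_sq hs0.le]
  have hnorm : √(2 * π * r ^ 2) = √2 * √π * r := by
    rw [sqrt_mul' _ (by positivity), sqrt_mul zero_le_two, sqrt_sq hr0.le]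
  have hexp :
      -(√2 * r * s + r / (√2 * s)) ^ 2 / (2 * r ^ 2) = -2 + -s ^ 2 + (1 - 1 / (4 * s ^ 2)) := by
    field_simp
    linear_combination (2 - 4 * s ^ 4 * √2 ^ 2) * h2
  rw [gaussianPDFReal, hr, hc, hδ, hnorm, sub_zero, hexp, exp_add, exp_add,
    sqrt_sq hs0.le]
  have hgain : 1 ≤ exp (1 - 1 / (4 * s ^ 2)) := by
    refine one_le_exp (sub_nonneg.2 ?_)
    rw [div_le_one (by positivity)]
    nlinarith
  calc exp (-2) / (2 * √π) * (exp (-s ^ 2) / s)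
      ≤ exp (-2) / (2 * √π) * (exp (-s ^ 2) / s) * exp (1 - 1 / (4 * s ^ 2)) :=
        le_mul_of_one_le_right (by positivity) hgain
    _ = r / (√2 * s) * ((√2 * √π * r)⁻¹ *
          (exp (-2) * exp (-s ^ 2) * exp (1 - 1 / (4 * s ^ 2)))) := by
        field_simp
        rw [h2]

lemma summable_exp_neg_div_sqrt_of_summable_gaussianReal_Ici {ρ : ℝ≥0} (hρ : ρ ≠ 0) {t : ℕ → ℝ}
    (h : Summable fun n => (gaussianReal 0 ρ).real (Set.Ici √(2 * ρ * t n))) :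
    Summable fun n => exp (-t n) / √(t n) := by
  have hC : 0 < exp (-2) / (2 * √π) := by positivity
  have htail_one : 0 < (gaussianReal 0 ρ).real (Set.Ici √(2 * ρ * 1)) :=
    lt_of_lt_of_le (by positivity) (exp_neg_div_sqrt_le_gaussianReal_Ici hρ le_rfl)
  have h_one_le : ∀ᶠ n in atTop, 1 ≤ t n := by
    filter_upwards [h.tendsto_atTop_zero.eventually_lt_const htail_one] with n hn
    by_contra! htn
    refine hn.not_ge (measureReal_mono (Set.Ici_subset_Ici.2 (sqrt_le_sqrt ?_)))
    gcongr
  refine (h.div_const (exp (-2) / (2 * √π))).of_norm_bounded_eventually_nat ?_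
  filter_upwards [h_one_le] with n hn
  rw [norm_of_nonneg (by positivity), le_div_iff₀' hC]
  exact exp_neg_div_sqrt_le_gaussianReal_Ici hρ hn

theorem gaussian_product_measure_of_not_summable (ρ : ℝ≥0) (hρ : 0 < ρ)
    (μ : Measure (ℕ → ℝ)) (hμ : IsProductGaussian ρ μ)
    (Δ : ℕ → ℝ) (hΔ : ∀ n, 1 < Δ n)
    (hsum : ¬ Summable fun n => 1 / (Δ n * Real.sqrt (Real.log (Δ n)))) :
    μ {x : ℕ → ℝ | ∃ N : ℕ, ∀ n ≥ N, |x n| < Real.sqrt (2 * ρ * Real.log (Δ n))} = 0 := by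
  have htail : ¬ Summable fun n => (gaussianReal 0 ρ).real (Set.Ici √(2 * ρ * log (Δ n))) :=
    fun h => hsum <| (summable_exp_neg_div_sqrt_of_summable_gaussianReal_Ici hρ.ne' h).congr
      fun n => by rw [exp_neg, exp_log (by linarith [hΔ n]), one_div, mul_inv, div_eq_mul_inv]
  refine measure_eventually_mem_eq_zero_of_tsum_compl_eq_top hμ
    (A := fun n => {y | |y| < √(2 * ρ * log (Δ n))})
    (fun n => measurableSet_lt measurable_abs measurable_const) ?_
  by_contra hfin
  refine htail <| .of_nonneg_of_le (fun _ => measureReal_nonneg)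
    (fun n => measureReal_mono fun y hy => ?_) (ENNReal.summable_toReal hfin)
  exact not_lt.2 (hy.trans (le_abs_self y))
end

section
/- Let 0 < ρ' < ρ and let S := { x ∈ ℝ^ℕ : there exists N ≥ 2 such that |x_n| < √(2ρ·ln n) for all n ≥ N }. Then μ_ρ(S) = 0 while μ_{ρ'}(S) = 1. -/
/-!
Let `Eₙ` be the event `|xₙ| ≥ √(2ρ log n)`. Under `μ_v` the coordinates are independent
`N(0, v)`, and the Gaussian tail `P(|X| ≥ c)` is `exp (-c² / 2v)` up to a factor polynomial in
`c`, so `μ_v(Eₙ)` is about `n ^ (-ρ / v)`. For `v = ρ' < ρ` the Chernoff bound makes this summable,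
and by the first Borel–Cantelli lemma almost surely only finitely many `Eₙ` occur. For `v = ρ` the
density on `[c, c + 1/c]` gives `μ_ρ(Eₙ) ≳ 1 / (n log n)`, which is not summable (Cauchy
condensation), and by the second Borel–Cantelli lemma almost surely infinitely many `Eₙ` occur.
-/

open MeasureTheory ProbabilityTheory Filter Real
open scoped NNReal ENNReal

section IIDProduct

variable {α : Type*}

lemma setOf_eventually_notMem_eq_compl_limsup (A : ℕ → Set α) :
    {x : ℕ → α | ∀ᶠ n in atTop, x n ∉ A n}
      = (limsup (fun n => {x : ℕ → α | x n ∈ A n}) atTop)ᶜ := by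
  ext x
  simp [mem_limsup_iff_frequently_mem, not_frequently]

variable [MeasurableSpace α]

def IsIIDProduct (ν : Measure α) (μ : Measure (ℕ → α)) : Prop :=
  ∀ (s : Finset ℕ) (A : ℕ → Set α), (∀ i ∈ s, MeasurableSet (A i)) →
    μ {x : ℕ → α | ∀ i ∈ s, x i ∈ A i} = ∏ i ∈ s, ν (A i)

namespace IsIIDProduct

variable {ν : Measure α} {μ : Measure (ℕ → α)}

lemma isProbabilityMeasure (h : IsIIDProduct ν μ) : IsProbabilityMeasure μ :=
  ⟨by simpa using h ∅ (fun _ => Set.univ) (by simp)⟩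

lemma measure_setOf_apply_mem (h : IsIIDProduct ν μ) (n : ℕ) {A : Set α}
    (hA : MeasurableSet A) : μ {x | x n ∈ A} = ν A := by
  simpa using h {n} (fun _ => A) (by simpa)

lemma iIndepSet (h : IsIIDProduct ν μ) {A : ℕ → Set α} (hA : ∀ n, MeasurableSet (A n)) :
    iIndepSet (fun n => {x : ℕ → α | x n ∈ A n}) μ := by
  have hmeas n : MeasurableSet {x : ℕ → α | x n ∈ A n} := measurable_pi_apply n (hA n)
  refine (iIndepSet_iff_meas_biInter hmeas).2 fun s => ?_
  have hcyl : (⋂ i ∈ s, {x : ℕ → α | x i ∈ A i}) = {x | ∀ i ∈ s, x i ∈ A i} := by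
    ext x
    simp
  rw [hcyl, h s A fun i _ => hA i]
  exact Finset.prod_congr rfl fun i _ => (h.measure_setOf_apply_mem i (hA i)).symm

lemma measure_eventually_notMem_eq_zero (h : IsIIDProduct ν μ) {A : ℕ → Set α}
    (hA : ∀ n, MeasurableSet (A n)) (hsum : ∑' n, ν (A n) = ∞) :
    μ {x | ∀ᶠ n in atTop, x n ∉ A n} = 0 := by
  have := h.isProbabilityMeasure
  have hmeas n : MeasurableSet {x : ℕ → α | x n ∈ A n} := measurable_pi_apply n (hA n)
  rw [setOf_eventually_notMem_eq_compl_limsup,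
    prob_compl_eq_zero_iff (.measurableSet_limsup hmeas)]
  refine measure_limsup_eq_one hmeas (h.iIndepSet hA) ?_
  simpa only [h.measure_setOf_apply_mem _ (hA _)] using hsum

lemma measure_eventually_notMem_eq_one (h : IsIIDProduct ν μ) {A : ℕ → Set α}
    (hA : ∀ n, MeasurableSet (A n)) (hsum : ∑' n, ν (A n) ≠ ∞) :
    μ {x | ∀ᶠ n in atTop, x n ∉ A n} = 1 := by
  have := h.isProbabilityMeasure
  have hmeas n : MeasurableSet {x : ℕ → α | x n ∈ A n} := measurable_pi_apply n (hA n)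
  rw [setOf_eventually_notMem_eq_compl_limsup,
    prob_compl_eq_one_iff (.measurableSet_limsup hmeas)]
  refine measure_limsup_atTop_eq_zero ?_
  simpa only [h.measure_setOf_apply_mem _ (hA _)] using hsum

end IsIIDProduct

end IIDProduct

lemma IsProductGaussian.isIIDProduct {ρ : ℝ≥0} {μ : Measure (ℕ → ℝ)}
    (h : IsProductGaussian ρ μ) : IsIIDProduct (gaussianReal 0 ρ) μ :=
  h

lemma gaussianReal_abs_ge_le_two_mul_exp (v : ℝ≥0) {c : ℝ} (hc : 0 ≤ c) :
    gaussianReal 0 v {y | c ≤ |y|} ≤ ENNReal.ofReal (2 * exp (-c ^ 2 / (2 * v))) := by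
  have hX : HasSubgaussianMGF id v (gaussianReal 0 v) :=
    ⟨integrable_exp_mul_gaussianReal, fun t => by simp [mgf_id_gaussianReal]⟩
  have hsub : {y : ℝ | c ≤ |y|} = {y | c ≤ id y} ∪ {y | c ≤ (-id) y} := by
    ext y; simp [le_abs]
  rw [hsub, two_mul, ENNReal.ofReal_add (by positivity) (by positivity)]
  refine (measure_union_le _ _).trans (add_le_add ?_ ?_)
  · rw [← ofReal_measureReal]; exact ENNReal.ofReal_le_ofReal (hX.measure_ge_le hc)
  · rw [← ofReal_measureReal]; exact ENNReal.ofReal_le_ofReal (hX.neg.measure_ge_le hc)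

lemma gaussianReal_Icc_ge_mul_gaussianPDFReal {v : ℝ≥0} (hv : v ≠ 0) {c d : ℝ} (hc : 0 ≤ c)
    (hcd : c ≤ d) :
    ENNReal.ofReal ((d - c) * gaussianPDFReal 0 v d) ≤ gaussianReal 0 v (Set.Icc c d) := by
  rw [gaussianReal_apply 0 hv, ENNReal.ofReal_mul (by linarith), mul_comm, ← Real.volume_Icc,
    ← setLIntegral_const]
  refine setLIntegral_mono (measurable_gaussianPDF 0 v) fun x hx => ENNReal.ofReal_le_ofReal ?_
  have : x ^ 2 ≤ d ^ 2 := pow_le_pow_left₀ (hc.trans hx.1) hx.2 2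
  simp only [gaussianPDFReal_def, sub_zero]
  gcongr

-- The factor `exp (-3 / 2v)` pays for `(c + c⁻¹)² ≤ c² + 3`.
lemma gaussianReal_Ici_ge_mul_exp {v : ℝ≥0} (hv : v ≠ 0) {c : ℝ} (hc : 1 ≤ c) :
    ENNReal.ofReal ((√(2 * π * v))⁻¹ * exp (-3 / (2 * v)) * (c⁻¹ * exp (-c ^ 2 / (2 * v))))
      ≤ gaussianReal 0 v (Set.Ici c) := by
  have hc0 : 0 < c := one_pos.trans_le hc
  have hIcc := gaussianReal_Icc_ge_mul_gaussianPDFReal hv hc0.le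
    (le_add_of_nonneg_right (inv_nonneg.2 hc0.le))
  refine le_trans ?_ (hIcc.trans (measure_mono Set.Icc_subset_Ici_self))
  refine ENNReal.ofReal_le_ofReal ?_
  have hsq : (c + c⁻¹) ^ 2 ≤ c ^ 2 + 3 := by
    have : c⁻¹ ≤ 1 := inv_le_one_of_one_le₀ hc
    have : 0 < c⁻¹ := inv_pos.2 hc0
    nlinarith [mul_inv_cancel₀ hc0.ne']
  have hexp : exp (-3 / (2 * v)) * exp (-c ^ 2 / (2 * v)) ≤ exp (-(c + c⁻¹) ^ 2 / (2 * v)) := by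
    rw [← exp_add, ← add_div]
    gcongr
    linarith
  simp only [gaussianPDFReal_def, sub_zero, add_sub_cancel_left]
  calc (√(2 * π * v))⁻¹ * exp (-3 / (2 * v)) * (c⁻¹ * exp (-c ^ 2 / (2 * v)))
      = c⁻¹ * ((√(2 * π * v))⁻¹ * (exp (-3 / (2 * v)) * exp (-c ^ 2 / (2 * v)))) := by ring
    _ ≤ c⁻¹ * ((√(2 * π * v))⁻¹ * exp (-(c + c⁻¹) ^ 2 / (2 * v))) := by gcongr

lemma Real.not_summable_inv_natCast_mul_log :
    ¬ Summable (fun n : ℕ => ((n : ℝ) * log n)⁻¹) := by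
  have hnonneg : 0 ≤ᶠ[atTop] fun n : ℕ => ((n : ℝ) * log n)⁻¹ :=
    .of_forall fun n => inv_nonneg.2 (mul_nonneg n.cast_nonneg (log_natCast_nonneg n))
  have hanti : ∀ᶠ k : ℕ in atTop,
      (((k + 1 : ℕ) : ℝ) * log (k + 1 : ℕ))⁻¹ ≤ ((k : ℝ) * log k)⁻¹ := by
    filter_upwards [eventually_ge_atTop 2] with k hk
    have hk' : (1 : ℝ) < k := by exact_mod_cast hk
    have := log_pos hk'
    push_cast
    gcongr <;> linarith
  rw [← summable_condensed_iff_of_eventually_nonneg hnonneg hanti]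
  intro h
  refine not_summable_natCast_inv ((h.mul_left (log 2)).congr fun k => ?_)
  have := log_pos one_lt_two
  push_cast
  rw [log_pow]
  field_simp

lemma tsum_gaussianReal_abs_ge_sqrt_log_ne_top {v : ℝ≥0} (hv : 0 < v) {a : ℝ} (hva : v < a) :
    ∑' n : ℕ, gaussianReal 0 v {y | √(2 * a * log n) ≤ |y|} ≠ ∞ := by
  have hv' : (0 : ℝ) < v := hv
  have hsum : Summable fun n : ℕ => 2 * exp (-(a / v) * log n) := by
    refine ((summable_nat_rpow.2 (?_ : -(a / v) < -1)).mul_left 2).congr_atTop ?_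
    · rw [neg_lt_neg_iff, one_lt_div hv']
      exact hva
    · filter_upwards [eventually_gt_atTop 0] with n hn
      rw [rpow_def_of_pos (by exact_mod_cast hn), mul_comm (log n)]
  refine ne_top_of_le_ne_top hsum.tsum_ofReal_ne_top (ENNReal.tsum_le_tsum fun n => ?_)
  have ha : 0 ≤ a := hv'.le.trans hva.le
  refine (gaussianReal_abs_ge_le_two_mul_exp v (sqrt_nonneg _)).trans_eq ?_
  rw [sq_sqrt (by have := log_natCast_nonneg n; positivity)]
  congr 3
  field_simp

lemma tsum_gaussianReal_abs_ge_sqrt_log_eq_top {v : ℝ≥0} (hv : v ≠ 0) :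
    ∑' n : ℕ, gaussianReal 0 v {y | √(2 * v * log n) ≤ |y|} = ∞ := by
  set K := (√(2 * π * v))⁻¹ * exp (-3 / (2 * v))
  have hv' : (0 : ℝ) < v := by positivity
  have hK : 0 < K := by positivity
  have hlower : ∀ᶠ n : ℕ in atTop,
      K * ((n : ℝ) * log n)⁻¹ ≤ (gaussianReal 0 v {y | √(2 * v * log n) ≤ |y|}).toReal := by
    have hlog := tendsto_log_atTop.comp tendsto_natCast_atTop_atTop
    filter_upwards [hlog.eventually_ge_atTop (2 * v), hlog.eventually_ge_atTop (2 * v)⁻¹,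
      eventually_gt_atTop 0] with n h2v hinv hn
    simp only [Function.comp_apply] at h2v hinv
    have hn' : (0 : ℝ) < n := by exact_mod_cast hn
    set c := √(2 * v * log n)
    have hc1 : 1 ≤ c := one_le_sqrt.2 <| by
      rw [inv_le_iff_one_le_mul₀ (by positivity)] at hinv
      linarith
    have hclog : c ≤ log n := sqrt_le_iff.2 ⟨by linarith, by nlinarith⟩
    have hexp : exp (-c ^ 2 / (2 * v)) = (n : ℝ)⁻¹ := by
      rw [sq_sqrt (by nlinarith), neg_div, mul_div_cancel_left₀ _ (by positivity), exp_neg,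
        exp_log hn']
    rw [← ENNReal.ofReal_le_iff_le_toReal (measure_ne_top _ _)]
    calc ENNReal.ofReal (K * ((n : ℝ) * log n)⁻¹)
        ≤ ENNReal.ofReal (K * (c⁻¹ * exp (-c ^ 2 / (2 * v)))) := by
          rw [hexp, ← mul_inv, mul_comm c]
          gcongr
      _ ≤ gaussianReal 0 v (Set.Ici c) := gaussianReal_Ici_ge_mul_exp hv hc1
      _ ≤ _ := measure_mono fun y hy => le_trans hy (le_abs_self y)
  by_contra h
  refine not_summable_inv_natCast_mul_log ((summable_mul_left_iff hK.ne').1 ?_)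
  refine (ENNReal.summable_toReal h).of_norm_bounded_eventually_nat ?_
  filter_upwards [hlower] with n hn
  rwa [norm_of_nonneg (by have := log_natCast_nonneg n; positivity)]

/-- The set of sequences eventually bounded by `√(2ρ ln n)` has `μ_ρ`-measure zero
but `μ_{ρ'}`-measure one for `ρ' < ρ`. -/
theorem gaussian_product_measure_log_bound_set (ρ ρ' : ℝ≥0) (hρ' : 0 < ρ') (hρ : ρ' < ρ)
    (μ μ' : Measure (ℕ → ℝ))
    (hμ : IsProductGaussian ρ μ) (hμ' : IsProductGaussian ρ' μ') :
    μ {x : ℕ → ℝ | ∃ N : ℕ, 2 ≤ N ∧ ∀ n ≥ N, |x n| < Real.sqrt (2 * ρ * Real.log n)} = 0 ∧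
    μ' {x : ℕ → ℝ | ∃ N : ℕ, 2 ≤ N ∧ ∀ n ≥ N, |x n| < Real.sqrt (2 * ρ * Real.log n)} = 1 := by
  set A : ℕ → Set ℝ := fun n => {y | √(2 * ρ * log n) ≤ |y|}
  have hA n : MeasurableSet (A n) := measurableSet_le measurable_const measurable_abs
  have hS : {x : ℕ → ℝ | ∃ N : ℕ, 2 ≤ N ∧ ∀ n ≥ N, |x n| < √(2 * ρ * log n)}
      = {x | ∀ᶠ n in atTop, x n ∉ A n} := by
    ext x
    simp only [Set.mem_ofPred, eventually_atTop]
    exact ⟨fun ⟨N, _, hN⟩ => ⟨N, fun n hn => (hN n hn).not_ge⟩, fun ⟨N, hN⟩ =>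
      ⟨max N 2, le_max_right N 2, fun n hn => not_le.1 (hN n (le_of_max_le_left hn))⟩⟩
  rw [hS]
  exact ⟨hμ.isIIDProduct.measure_eventually_notMem_eq_zero hA
      (tsum_gaussianReal_abs_ge_sqrt_log_eq_top (hρ'.trans hρ).ne'),
    hμ'.isIIDProduct.measure_eventually_notMem_eq_one hA
      (tsum_gaussianReal_abs_ge_sqrt_log_ne_top hρ' (by exact_mod_cast hρ))⟩
end

section
/- Fix an integer d ≥ 0 and m > 0. For L > 0 define C_m^L := (2/π)^{d+1} · L^{−2(d+1)} · ∫_{ℝ^{d+1}} (‖p‖² + m²)^{−1} · ∏_{k=0}^{d} sin²(p_k L/2)/p_k² dp (Lebesgue integral over p = (p_0,…,p_d) ∈ ℝ^{d+1}). Then L^{d+1}·C_m^L converges to 1/m² as L → ∞. -/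
open MeasureTheory Filter
open scoped Topology

/-!
Substituting `p = q / L` turns `L^{d+1} C_m^L` into
`(2/π)^{d+1} ∫ (‖q / L‖² + m²)⁻¹ ∏ₖ K (q k) dq` with `K x = sin² (x/2) / x²`
(`K = boxKernel`), and dominated convergence sends this to `(2/π)^{d+1} m⁻² (∫ K)^{d+1}`.
The value `∫ K = π/2` comes from Fourier inversion at `0` for the tent function
`max (1 - |x|) 0`, whose Fourier transform is `sin² (π w) / (π w)² = 4 K (2π w)`.
-/

open Real
open scoped FourierTransform

noncomputable def boxKernel (x : ℝ) : ℝ := sin (x / 2) ^ 2 / x ^ 2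

lemma boxKernel_nonneg (x : ℝ) : 0 ≤ boxKernel x := by unfold boxKernel; positivity

@[fun_prop]
lemma measurable_boxKernel : Measurable boxKernel := by unfold boxKernel; fun_prop

lemma boxKernel_le (x : ℝ) : boxKernel x ≤ 2 * (1 + x ^ 2)⁻¹ := by
  rcases eq_or_ne x 0 with rfl | hx
  · norm_num [boxKernel]
  rw [boxKernel, div_le_iff₀ (by positivity), ← div_eq_mul_inv, div_mul_eq_mul_div,
    le_div_iff₀ (by positivity)]
  nlinarith [sin_sq_le_sq (x := x / 2), sin_sq_le_one (x / 2),
    mul_nonneg (sq_nonneg (sin (x / 2))) (sq_nonneg x)]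

lemma integrable_boxKernel : Integrable boxKernel :=
  (integrable_inv_one_add_sq.const_mul 2).mono' measurable_boxKernel.aestronglyMeasurable
    (ae_of_all _ fun x => by
      rw [Real.norm_of_nonneg (boxKernel_nonneg x)]; exact boxKernel_le x)

lemma sin_mul_div_two_sq_div_sq (x L : ℝ) :
    sin (x * L / 2) ^ 2 / x ^ 2 = L ^ 2 * boxKernel (x * L) := by
  rcases eq_or_ne x 0 with rfl | hx
  · simp [boxKernel]
  rcases eq_or_ne L 0 with rfl | hL
  · simp
  rw [boxKernel]
  field_simp

lemma integral_cos_mul_mul_one_sub {a : ℝ} (ha : a ≠ 0) :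
    ∫ v in (0 : ℝ)..1, cos (a * v) * (1 - v) = 2 * boxKernel a := by
  have hderiv : ∀ v : ℝ, HasDerivAt (fun v => (1 - v) * sin (a * v) / a - cos (a * v) / a ^ 2)
      (cos (a * v) * (1 - v)) v := by
    intro v
    have hlin : HasDerivAt (fun v : ℝ => a * v) a v := by
      simpa using (hasDerivAt_id v).const_mul a
    have hsub : HasDerivAt (fun v : ℝ => 1 - v) (-1) v := by
      simpa using (hasDerivAt_id' v).const_sub 1
    refine (((hsub.fun_mul hlin.sin).div_const a).fun_sub
      (hlin.cos.div_const (a ^ 2))).congr_deriv ?_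
    field_simp
    ring
  rw [intervalIntegral.integral_eq_sub_of_hasDerivAt (fun v _ => hderiv v)
    (by apply Continuous.intervalIntegrable; fun_prop), boxKernel]
  have hcos : cos a = 1 - 2 * sin (a / 2) ^ 2 := by
    conv_lhs => rw [show a = 2 * (a / 2) by ring]
    rw [cos_two_mul, cos_sq']; ring
  simp only [mul_one, mul_zero, sub_self, zero_mul, zero_div, sin_zero, cos_zero, hcos]
  field_simp
  ring

noncomputable def tent (x : ℝ) : ℝ := max (1 - |x|) 0

@[fun_prop]
lemma continuous_tent : Continuous tent := by unfold tent; fun_prop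

lemma tent_of_mem_Icc {x : ℝ} (hx : x ∈ Set.Icc (0 : ℝ) 1) : tent x = 1 - x := by
  rw [tent, abs_of_nonneg hx.1, max_eq_left (by linarith [hx.2])]

lemma tent_neg (x : ℝ) : tent (-x) = tent x := by rw [tent, tent, abs_neg]

lemma support_tent_subset : Function.support tent ⊆ Set.Ioc (-1) 1 := by
  intro x hx
  rw [Function.mem_support, tent, ne_eq, max_eq_right_iff, not_le, sub_pos, abs_lt] at hx
  exact ⟨hx.1, hx.2.le⟩

lemma integrable_tent : Integrable fun x => (tent x : ℂ) :=
  (continuous_tent.integrable_of_hasCompactSupport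
    (HasCompactSupport.intro isCompact_Icc fun _ hx => Function.notMem_support.mp
      fun h => hx (Set.Ioc_subset_Icc_self (support_tent_subset h)))).ofReal

lemma fourier_tent {w : ℝ} (hw : w ≠ 0) :
    𝓕 (fun x => (tent x : ℂ)) w = ((4 * boxKernel (2 * π * w) : ℝ) : ℂ) := by
  set f : ℝ → ℂ := fun v => Complex.exp (↑(-2 * π * v * w) * Complex.I) • (tent v : ℂ)
  have hf : Continuous f := by fun_prop
  have hsupp : Function.support f ⊆ Set.Ioc (-1) 1 := by
    refine subset_trans ?_ support_tent_subset
    intro v hv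
    simp_all [f]
  have hsymm : ∀ v ∈ Set.uIcc (0 : ℝ) 1,
      f (-v) + f v = ((2 * (cos (2 * π * w * v) * (1 - v)) : ℝ) : ℂ) := by
    intro v hv
    rw [Set.uIcc_of_le zero_le_one] at hv
    simp only [f, tent_neg, tent_of_mem_Icc hv, smul_eq_mul]
    push_cast
    rw [← add_mul, ← mul_assoc, Complex.two_cos]
    ring_nf
  calc 𝓕 (fun x => (tent x : ℂ)) w = ∫ v in (-1 : ℝ)..1, f v := by
        rw [Real.fourier_real_eq_integral_exp_smul,
          intervalIntegral.integral_eq_integral_of_support_subset hsupp]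
    _ = ∫ v in (0 : ℝ)..1, f (-v) + f v := by
        rw [intervalIntegral.integral_add (f := fun v => f (-v))
          ((hf.comp continuous_neg).intervalIntegrable _ _) (hf.intervalIntegrable _ _),
          intervalIntegral.integral_comp_neg f, neg_zero,
          intervalIntegral.integral_add_adjacent_intervals (hf.intervalIntegrable _ _)
            (hf.intervalIntegrable _ _)]
    _ = _ := by
        rw [intervalIntegral.integral_congr hsymm, intervalIntegral.integral_ofReal,
          intervalIntegral.integral_const_mul,
          integral_cos_mul_mul_one_sub (by positivity)]
        push_cast; ring

lemma fourier_tent_ae_eq :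
    𝓕 (fun x => (tent x : ℂ)) =ᵐ[volume] fun w => ((4 * boxKernel (2 * π * w) : ℝ) : ℂ) := by
  filter_upwards [Measure.ae_ne volume (0 : ℝ)] with w hw using fourier_tent hw

lemma integral_boxKernel : ∫ x, boxKernel x = π / 2 := by
  have hint : Integrable (𝓕 fun x => (tent x : ℂ)) :=
    ((integrable_boxKernel.comp_mul_left' (by positivity : 2 * π ≠ 0)).const_mul 4).ofReal.congr
      fourier_tent_ae_eq.symm
  have hinv := integrable_tent.fourierInv_fourier_eq hint
    ((Complex.continuous_ofReal.comp continuous_tent).continuousAt (x := 0))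
  simp only [Real.fourierInv_eq, inner_zero_right, AddChar.map_zero_eq_one, one_smul] at hinv
  rw [integral_congr_ae fourier_tent_ae_eq, integral_complex_ofReal, integral_const_mul,
    Measure.integral_comp_mul_left, tent, abs_zero, sub_zero, max_eq_left zero_le_one] at hinv
  rw [abs_of_pos (by positivity), smul_eq_mul] at hinv
  have h := Complex.ofReal_injective hinv
  field_simp at h
  linarith

lemma integral_mul_prod_sin_sq_div_sq {n : ℕ} (F : (Fin n → ℝ) → ℝ) {L : ℝ} (hL : 0 < L) :
    ∫ p, F p * ∏ k, sin (p k * L / 2) ^ 2 / p k ^ 2 =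
      L ^ n * ∫ q, F (L⁻¹ • q) * ∏ k, boxKernel (q k) := by
  have hrescale : ∀ p : Fin n → ℝ, F p * ∏ k, sin (p k * L / 2) ^ 2 / p k ^ 2 =
      L ^ (2 * n) * (F (L⁻¹ • L • p) * ∏ k, boxKernel ((L • p) k)) := by
    intro p
    simp only [sin_mul_div_two_sq_div_sq, Finset.prod_mul_distrib, Finset.prod_const,
      Finset.card_univ, Fintype.card_fin, inv_smul_smul₀ hL.ne', Pi.smul_apply, smul_eq_mul,
      mul_comm L, pow_mul]
    ring
  simp_rw [hrescale]
  rw [integral_const_mul, Measure.integral_comp_smul_of_nonneg (hR := hL.le) volume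
    (fun q => F (L⁻¹ • q) * ∏ k, boxKernel (q k)), Module.finrank_fin_fun, smul_eq_mul]
  field_simp
  ring

lemma tendsto_integral_comp_inv_smul_mul {E : Type*} [NormedAddCommGroup E] [NormedSpace ℝ E]
    [MeasurableSpace E] [BorelSpace E] {μ : Measure E} {F g : E → ℝ} {C : ℝ}
    (hF : Measurable F) (hF0 : ContinuousAt F 0) (hFC : ∀ x, |F x| ≤ C) (hg : Integrable g μ) :
    Tendsto (fun L : ℝ => ∫ q, F (L⁻¹ • q) * g q ∂μ) atTop (𝓝 (F 0 * ∫ q, g q ∂μ)) := by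
  rw [← integral_const_mul]
  refine tendsto_integral_filter_of_dominated_convergence (fun q => C * ‖g q‖)
    (Eventually.of_forall fun L =>
      ((hF.comp (continuous_const_smul L⁻¹).measurable).aestronglyMeasurable.mul hg.1))
    (Eventually.of_forall fun L => ae_of_all _ fun q => ?_) (hg.norm.const_mul C)
    (ae_of_all _ fun q => ?_)
  · rw [norm_mul, Real.norm_eq_abs]
    exact mul_le_mul_of_nonneg_right (hFC _) (norm_nonneg _)
  · have hsmul : Tendsto (fun L : ℝ => L⁻¹ • q) atTop (𝓝 0) := by
      simpa only [zero_smul] using (tendsto_inv_atTop_zero (𝕜 := ℝ)).smul_const q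
    exact (hF0.tendsto.comp hsmul).mul_const (g q)

/-- The common diagonal covariance `C_m^L` of a free Euclidean scalar field of mass `m`
averaged over boxes of side `L` satisfies `L^{d+1}·C_m^L → 1/m²` as `L → ∞`. -/
theorem box_covariance_large_L_limit (d : ℕ) (m : ℝ) (hm : 0 < m) :
    Tendsto (fun L : ℝ =>
        L ^ (d + 1) *
          ((2 / Real.pi) ^ (d + 1) * (1 / L ^ (2 * (d + 1))) *
            ∫ p : Fin (d + 1) → ℝ,
              (1 / ((∑ k, p k ^ 2) + m ^ 2)) *
                ∏ k, Real.sin (p k * L / 2) ^ 2 / p k ^ 2))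
      atTop (𝓝 (1 / m ^ 2)) := by
  set F : (Fin (d + 1) → ℝ) → ℝ := fun p => 1 / ((∑ k, p k ^ 2) + m ^ 2)
  have hF : Continuous F := by
    refine continuous_const.div (by fun_prop) fun p => ?_
    positivity
  have hFC : ∀ p, |F p| ≤ 1 / m ^ 2 := fun p => by
    rw [abs_of_pos (by positivity)]
    exact one_div_le_one_div_of_le (by positivity) (le_add_of_nonneg_left (by positivity))
  have hlim := tendsto_integral_comp_inv_smul_mul (μ := volume) hF.measurable hF.continuousAt hFC
    (Integrable.fintype_prod (f := fun _ => boxKernel) fun _ => integrable_boxKernel)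
  rw [integral_fintype_prod_volume_eq_pow, integral_boxKernel, Fintype.card_fin] at hlim
  have hval : (2 / π) ^ (d + 1) * (F 0 * (π / 2) ^ (d + 1)) = 1 / m ^ 2 := by
    simp only [F, Pi.zero_apply, zero_pow two_ne_zero, Finset.sum_const_zero, zero_add]
    rw [mul_left_comm, ← mul_pow, div_mul_div_comm, mul_comm 2 π, div_self (by positivity),
      one_pow, mul_one]
  rw [← hval]
  refine (hlim.const_mul _).congr' ?_
  filter_upwards [eventually_gt_atTop 0] with L hL
  rw [integral_mul_prod_sin_sq_div_sq F hL]
  field_simp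
  ring
end

section
/- Let E be a real Hilbert space, T : E → E a compact bounded linear operator, c > 0, and set M := c·Id + T. If ⟨Mx, x⟩ > 0 for every x ≠ 0, then M is invertible in the algebra of bounded operators: there exists a bounded linear operator S : E → E with M∘S = Id and S∘M = Id (in particular M is bounded, injective, surjective, and has bounded inverse). -/
/-!
A vector `x ≠ 0` with `⟪M x, x⟫ > 0` cannot lie in the kernel of `M`, so `M` is injective.
By the Fredholm alternative for the compact operator `T` at `-c ≠ 0`, an injective `c • 1 + T`
is already a unit of the algebra of bounded operators on the Banach space `E`.
-/

theorem injective_of_forall_inner_pos {E : Type*} [NormedAddCommGroup E] [InnerProductSpace ℝ E]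
    (M : E →ₗ[ℝ] E) (hpos : ∀ x : E, x ≠ 0 → 0 < (inner ℝ (M x) x : ℝ)) :
    Function.Injective M := by
  refine (injective_iff_map_eq_zero M).mpr fun x hx => ?_
  by_contra hx0
  simpa [hx] using hpos x hx0

theorem IsCompactOperator.isUnit_smul_one_add_of_injective {𝕜 X : Type*}
    [NontriviallyNormedField 𝕜] [NormedAddCommGroup X] [NormedSpace 𝕜 X] [CompleteSpace X]
    {T : X →L[𝕜] X} (hT : IsCompactOperator T) {c : 𝕜} (hc : c ≠ 0)
    (hinj : Function.Injective (c • 1 + T : X →L[𝕜] X)) : IsUnit (c • 1 + T : X →L[𝕜] X) := by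
  have hsub : T - (-c) • (1 : X →L[𝕜] X) = c • 1 + T := by rw [neg_smul, sub_neg_eq_add, add_comm]
  have hnot : ¬ Module.End.HasEigenvalue (T : Module.End 𝕜 X) (-c) := by
    intro hev
    obtain ⟨x, hx⟩ := hev.exists_hasEigenvector
    have hTx : T x = (-c) • x := hx.apply_eq_smul
    refine hx.2 (hinj ?_)
    rw [map_zero, ← hsub]
    simp [hTx]
  have hres := (hT.hasEigenvalue_or_mem_resolventSet (neg_ne_zero.mpr hc)).resolve_left hnot
  rw [spectrum.mem_resolventSet_iff, ← IsUnit.neg_iff] at hres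
  convert hres using 1
  rw [Algebra.algebraMap_eq_smul_one, neg_sub, ← hsub]

/-- If `T` is a compact operator on a real Hilbert space, `c > 0`, and `M = c·Id + T`
satisfies `⟨Mx, x⟩ > 0` for all `x ≠ 0`, then `M` is invertible in the algebra of
bounded operators. -/
theorem compact_perturbation_of_identity_invertible
    (E : Type*) [NormedAddCommGroup E] [InnerProductSpace ℝ E] [CompleteSpace E]
    (T : E →L[ℝ] E) (hT : IsCompactOperator T) (c : ℝ) (hc : 0 < c)
    (M : E →L[ℝ] E) (hM : M = c • ContinuousLinearMap.id ℝ E + T)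
    (hpos : ∀ x : E, x ≠ 0 → 0 < (inner ℝ (M x) x : ℝ)) :
    ∃ S : E →L[ℝ] E,
      M.comp S = ContinuousLinearMap.id ℝ E ∧ S.comp M = ContinuousLinearMap.id ℝ E := by
  have hinj : Function.Injective M := injective_of_forall_inner_pos (M : E →ₗ[ℝ] E) hpos
  subst hM
  exact isUnit_iff_exists.mp (hT.isUnit_smul_one_add_of_injective hc.ne' hinj)
end

section
/- Suppose G is nontrivial (has at least two elements). Then the set of all maps g : [0,1] → G that are continuous at at least one point s₀ ∈ [0,1] has ν-measure zero; equivalently, ν is supported on the set of maps g : [0,1] → G that are discontinuous at every point of [0,1]. -/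
/-! Separating two points of `G` by disjoint open sets, and using that Haar measure charges
nonempty open sets, every point has an open neighbourhood of measure `< 1`; by compactness
finitely many of them cover `G`. If `g` is continuous at some point, it maps a whole basic open
set `b` of `[0,1]` into one member `U` of this cover. Under the product measure the infinitely
many independent values `g s`, `s ∈ b`, all lie in `U` with probability at most `μH U ^ k` for
every `k`, hence zero, and there are only countably many pairs `(b, U)`. -/

open MeasureTheory Set Filter Topology TopologicalSpace
open scoped unitInterval

/-- `ν` is the product over the unit interval of copies of the measure `μH` on `G`:
all its finite-dimensional marginals are the corresponding finite products.  This
property determines `ν` uniquely on the product σ-algebra. -/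
def IsHaarProduct {G : Type*} [MeasurableSpace G] (μH : Measure G)
    (ν : Measure (I → G)) : Prop :=
  ∀ (s : Finset I) (A : I → Set G), (∀ i ∈ s, MeasurableSet (A i)) →
    ν {g : I → G | ∀ i ∈ s, g i ∈ A i} = ∏ i ∈ s, μH (A i)

theorem IsHaarProduct.measure_mapsTo_eq_zero {G : Type*} [MeasurableSpace G]
    {μH : Measure G} {ν : Measure (I → G)} (hν : IsHaarProduct μH ν)
    {J : Set I} (hJ : J.Infinite) {B : Set G} (hB : MeasurableSet B) (hB_lt : μH B < 1) :
    ν {g : I → G | MapsTo g J B} = 0 := by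
  have h_le_pow (k : ℕ) : ν {g : I → G | MapsTo g J B} ≤ μH B ^ k := by
    obtain ⟨F, hFJ, rfl⟩ := hJ.exists_subset_card_eq k
    calc ν {g : I → G | MapsTo g J B}
        ≤ ν {g : I → G | ∀ i ∈ F, g i ∈ B} := measure_mono fun g hg i hi => hg (hFJ hi)
      _ = μH B ^ F.card := by rw [hν F (fun _ => B) (fun _ _ => hB), Finset.prod_const]
  exact nonpos_iff_eq_zero.1 <|
    ge_of_tendsto' (ENNReal.tendsto_pow_atTop_nhds_zero_of_lt_one hB_lt) h_le_pow

theorem exists_isOpen_mem_measure_lt_one {X : Type*} [TopologicalSpace X] [T2Space X]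
    [Nontrivial X] [MeasurableSpace X] [OpensMeasurableSpace X] (μ : Measure X)
    [IsProbabilityMeasure μ] [μ.IsOpenPosMeasure] (x : X) :
    ∃ U, IsOpen U ∧ x ∈ U ∧ μ U < 1 := by
  obtain ⟨y, hyx⟩ := exists_ne x
  obtain ⟨U, V, hU, hV, hxU, hyV, hUV⟩ := t2_separation hyx.symm
  refine ⟨U, hU, hxU, ?_⟩
  calc μ U ≤ μ Vᶜ := measure_mono hUV.subset_compl_right
    _ = 1 - μ V := prob_compl_eq_one_sub hV.measurableSet
    _ < 1 := ENNReal.sub_lt_self ENNReal.one_ne_top one_ne_zero (hV.measure_pos μ ⟨y, hyV⟩).ne'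

theorem exists_finite_open_cover_measure_lt_one {X : Type*} [TopologicalSpace X]
    [CompactSpace X] [T2Space X] [Nontrivial X] [MeasurableSpace X] [OpensMeasurableSpace X]
    (μ : Measure X) [IsProbabilityMeasure μ] [μ.IsOpenPosMeasure] :
    ∃ 𝒰 : Set (Set X), 𝒰.Finite ∧ (∀ U ∈ 𝒰, IsOpen U ∧ μ U < 1) ∧ ⋃₀ 𝒰 = univ := by
  choose U hU_open hxU hU_lt using exists_isOpen_mem_measure_lt_one μ
  obtain ⟨t, -, ht⟩ :=
    isCompact_univ.elim_nhds_subcover U fun x _ => (hU_open x).mem_nhds (hxU x)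
  refine ⟨U '' t, t.finite_toSet.image U, forall_mem_image.2 fun x _ => ⟨hU_open x, hU_lt x⟩, ?_⟩
  rw [sUnion_image]
  exact univ_subset_iff.1 ht

theorem setOf_exists_continuousAt_subset {X Y : Type*} [TopologicalSpace X]
    [SecondCountableTopology X] [TopologicalSpace Y] {𝒰 : Set (Set Y)}
    (h𝒰 : ∀ U ∈ 𝒰, IsOpen U) (h𝒰_cover : ⋃₀ 𝒰 = univ) :
    {g : X → Y | ∃ x, ContinuousAt g x} ⊆
      ⋃ b ∈ {b ∈ countableBasis X | b.Nonempty}, ⋃ U ∈ 𝒰, {g | MapsTo g b U} := by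
  rintro g ⟨x, hg⟩
  obtain ⟨U, hU, hgxU⟩ : g x ∈ ⋃₀ 𝒰 := h𝒰_cover ▸ mem_univ _
  obtain ⟨b, hb, hxb, hbU⟩ := (isBasis_countableBasis X).mem_nhds_iff.1
    (hg.preimage_mem_nhds ((h𝒰 U hU).mem_nhds hgxU))
  simp only [mem_iUnion]
  exact ⟨b, ⟨hb, x, hxb⟩, U, hU, fun s hs => hbU hs⟩

theorem continuousAt_somewhere_measure_zero_general
    (G : Type*) [Group G] [TopologicalSpace G]
    [CompactSpace G] [T2Space G] [MeasurableSpace G] [BorelSpace G] [Nontrivial G]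
    (μH : Measure G) [μH.IsHaarMeasure] [IsProbabilityMeasure μH]
    (ν : Measure (I → G)) (hν : IsHaarProduct μH ν) :
    ν {g : I → G | ∃ s₀ : I, ContinuousAt g s₀} = 0 := by
  obtain ⟨𝒰, h𝒰_fin, h𝒰, h𝒰_cover⟩ := exists_finite_open_cover_measure_lt_one μH
  refine measure_mono_null (setOf_exists_continuousAt_subset (fun U hU => (h𝒰 U hU).1) h𝒰_cover)
    ((measure_biUnion_null_iff ((countable_countableBasis I).mono (sep_subset _ _))).2
      fun b ⟨hb, s, hs⟩ => (measure_biUnion_null_iff h𝒰_fin.countable).2 fun U hU => ?_)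
  have hb_infinite : b.Infinite :=
    infinite_of_mem_nhds s ((isOpen_of_mem_countableBasis hb).mem_nhds hs)
  exact hν.measure_mapsTo_eq_zero hb_infinite (h𝒰 U hU).1.measurableSet (h𝒰 U hU).2

/-- For a nontrivial compact group `G` with Haar probability measure `μH`, the set of maps
`[0,1] → G` continuous at at least one point has outer measure zero for the product
measure `ν`. -/
theorem continuousAt_somewhere_measure_zero
    (G : Type*) [Group G] [TopologicalSpace G] [IsTopologicalGroup G]
    [CompactSpace G] [T2Space G] [MeasurableSpace G] [BorelSpace G] [Nontrivial G]
    (μH : Measure G) [μH.IsHaarMeasure] [IsProbabilityMeasure μH]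
    (ν : Measure (I → G)) (hν : IsHaarProduct μH ν) :
    ν {g : I → G | ∃ s₀ : I, ContinuousAt g s₀} = 0 :=
  continuousAt_somewhere_measure_zero_general G μH ν hν
end

section
/- Let U ⊆ G be a Borel subset with 0 < μ_H(U) < 1. Then the set Θ_U := { g : [0,1] → G : there exists a nonempty open subset I of [0,1] with g(I) ⊆ U } has ν-measure zero, i.e., Θ_U is contained in a measurable set of ν-measure zero. -/
/-!
A map `g` sending a nonempty open `J ⊆ [0,1]` into `U` sends a basic open set of a fixed
countable basis into `U`, so `Θ_U` is a countable union of the sets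
`{g | ∀ x ∈ b, g x ∈ U}` with `b` nonempty open. Such a `b` is infinite, so it contains
`n` points for every `n`, and the product structure bounds the measure of that set by
`μH U ^ n`, which tends to `0` since `μH U < 1`.
-/

open MeasureTheory
open scoped unitInterval

open TopologicalSpace
open scoped ENNReal

section

variable {G : Type*} [MeasurableSpace G] {U : Set G}

theorem measure_setOf_forall_mem_eq_zero_of_infinite {ι : Type*} {ν : Measure (ι → G)}
    {c : ℝ≥0∞} (hc : c < 1) (hν : ∀ s : Finset ι, ν {g | ∀ i ∈ s, g i ∈ U} ≤ c ^ s.card)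
    {S : Set ι} (hS : S.Infinite) : ν {g | ∀ i ∈ S, g i ∈ U} = 0 := by
  refine le_antisymm (ge_of_tendsto' (ENNReal.tendsto_pow_atTop_nhds_zero_of_lt_one hc)
    fun n => ?_) bot_le
  obtain ⟨s, hsS, rfl⟩ := hS.exists_subset_card_eq n
  calc ν {g | ∀ i ∈ S, g i ∈ U} ≤ ν {g | ∀ i ∈ s, g i ∈ U} :=
        measure_mono fun g hg i hi => hg i (hsS hi)
    _ ≤ c ^ s.card := hν s

theorem measure_setOf_exists_isOpen_image_subset_eq_zero {X : Type*} [TopologicalSpace X]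
    [SecondCountableTopology X] {ν : Measure (X → G)}
    (h : ∀ J : Set X, IsOpen J → J.Nonempty → ν {g | ∀ x ∈ J, g x ∈ U} = 0) :
    ν {g | ∃ J : Set X, IsOpen J ∧ J.Nonempty ∧ g '' J ⊆ U} = 0 := by
  have hB := isBasis_countableBasis X
  have hnull : ν (⋃ b ∈ countableBasis X, {g | ∀ x ∈ b, g x ∈ U}) = 0 :=
    (measure_biUnion_null_iff (countable_countableBasis X)).2 fun b hb =>
      h b (hB.isOpen hb) (nonempty_of_mem_countableBasis hb)
  refine measure_mono_null ?_ hnull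
  rintro g ⟨J, hJ, ⟨x, hx⟩, hJU⟩
  obtain ⟨b, hb, -, hbJ⟩ := hB.exists_subset_of_mem_open hx hJ
  exact Set.mem_biUnion hb fun y hy => hJU ⟨y, hbJ hy, rfl⟩

theorem IsHaarProduct.measure_setOf_forall_mem {μH : Measure G} {ν : Measure (I → G)}
    (hν : IsHaarProduct μH ν) (hU : MeasurableSet U) (s : Finset I) :
    ν {g | ∀ i ∈ s, g i ∈ U} = μH U ^ s.card := by
  rw [hν s (fun _ => U) fun _ _ => hU, Finset.prod_const]

end

theorem theta_measure_zero_general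
    (G : Type*) [MeasurableSpace G]
    (μH : Measure G)
    (ν : Measure (I → G)) (hν : IsHaarProduct μH ν)
    (U : Set G) (hU : MeasurableSet U) (hU1 : μH U < 1) :
    ν {g : I → G | ∃ J : Set I, IsOpen J ∧ J.Nonempty ∧ g '' J ⊆ U} = 0 := by
  refine measure_setOf_exists_isOpen_image_subset_eq_zero fun J hJ ⟨x, hx⟩ => ?_
  have hJinf : J.Infinite := infinite_of_mem_nhds x (hJ.mem_nhds hx)
  exact measure_setOf_forall_mem_eq_zero_of_infinite hU1
    (fun s => (hν.measure_setOf_forall_mem hU s).le) hJinf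

/-- For a Borel set `U ⊆ G` with `0 < μH U < 1`, the set `Θ_U` of maps sending some
nonempty open subset of `[0,1]` into `U` has outer measure zero for the product
measure `ν`. -/
theorem theta_measure_zero
    (G : Type*) [Group G] [TopologicalSpace G] [IsTopologicalGroup G]
    [CompactSpace G] [T2Space G] [MeasurableSpace G] [BorelSpace G]
    (μH : Measure G) [μH.IsHaarMeasure] [IsProbabilityMeasure μH]
    (ν : Measure (I → G)) (hν : IsHaarProduct μH ν)
    (U : Set G) (hU : MeasurableSet U) (hU0 : 0 < μH U) (hU1 : μH U < 1) :
    ν {g : I → G | ∃ J : Set I, IsOpen J ∧ J.Nonempty ∧ g '' J ⊆ U} = 0 :=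
  theta_measure_zero_general G μH ν hν U hU hU1
end
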